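/- Let $D_{\mathrm{opt}}(w;\sigma) = \frac{\int_{-1}^{1} u\, e^{-(u-w)^2/2\sigma^2}\, du}{\int_{-1}^{1} e^{-(u-w)^2/2\sigma^2}\, du}$ be the optimal denoiser for the uniform distribution on $[-1,1]$. Then there exists a constant $L^\ast > 0$ such that $|\partial_w D_{\mathrm{opt}}(w;\sigma)| \le L^\ast$ for all $w \in \mathbb{R}$ and all $\sigma > 0$; i.e. $D_{\mathrm{opt}}(\cdot;\sigma)$ is $L^\ast$-Lipschitz uniformly in $\sigma$. -/

import Mathlib

open MeasureTheory Set

/-- The optimal denoiser (posterior mean under Gaussian noise of variance `σ²`)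
for the uniform distribution on `[-1, 1]`. -/
noncomputable def Dopt1 (σ w : ℝ) : ℝ :=
  (∫ u in Icc (-1 : ℝ) 1, u * Real.exp (-(u - w) ^ 2 / (2 * σ ^ 2))) /
    ∫ u in Icc (-1 : ℝ) 1, Real.exp (-(u - w) ^ 2 / (2 * σ ^ 2))

namespace UniformDenoiserAux

open Metric

noncomputable def G (s w u : ℝ) : ℝ := Real.exp (-(u - w)^2 / (2*s))

lemma contG (s w : ℝ) : Continuous (G s w) := by
  unfold G; fun_prop

lemma Gpos (s w u : ℝ) : 0 < G s w u := Real.exp_pos _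

lemma Gle1 {s : ℝ} (hs : 0 < s) (w u : ℝ) : G s w u ≤ 1 := by
  rw [G, Real.exp_le_one_iff]
  apply div_nonpos_of_nonpos_of_nonneg
  · nlinarith [sq_nonneg (u-w)]
  · positivity

lemma intOn (s w : ℝ) (φ : ℝ → ℝ) (hφ : Continuous φ) :
    IntegrableOn (fun u => φ u * G s w u) (Icc (-1:ℝ) 1) := by
  exact (hφ.mul (contG s w)).integrableOn_Icc

lemma Zpos {s : ℝ} (w : ℝ) : 0 < ∫ u in Icc (-1:ℝ) 1, G s w u := by
  rw [integral_Icc_eq_integral_Ioc, ← intervalIntegral.integral_of_le (by norm_num : (-1:ℝ) ≤ 1)]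
  apply intervalIntegral.intervalIntegral_pos_of_pos_on ((contG s w).intervalIntegrable _ _)
  · exact fun x _ => Gpos s w x
  · norm_num

lemma hasDerivG {s : ℝ} (hs : 0 < s) (u x : ℝ) :
    HasDerivAt (fun x => G s x u) ((u - x)/s * G s x u) x := by
  have h0 : HasDerivAt (fun x : ℝ => u - x) (-1) x := (hasDerivAt_id x).const_sub u
  have h1' := ((h0.pow 2).neg).div_const (2*s)
  norm_num at h1'
  have he : 2 * (u - x) / (2*s) = (u-x)/s := by
    field_simp
  rw [he] at h1'
  have h2 := h1'.exp
  rw [show (u - x) / s * G s x u = G s x u * ((u-x)/s) from mul_comm _ _]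
  exact h2

lemma hasDeriv_J {σ : ℝ} (hσ : 0 < σ) (w : ℝ) (φ : ℝ → ℝ) (hφ : Continuous φ)
    (hb : ∀ u ∈ Icc (-1:ℝ) 1, |φ u| ≤ 1) :
    HasDerivAt (fun x => ∫ u in Icc (-1:ℝ) 1, φ u * G (σ^2) x u)
      (∫ u in Icc (-1:ℝ) 1, φ u * ((u - w)/σ^2 * G (σ^2) w u)) w := by
  have hs : (0:ℝ) < σ^2 := by positivity
  have key := hasDerivAt_integral_of_dominated_loc_of_deriv_le
    (μ := volume.restrict (Icc (-1:ℝ) 1))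
    (F := fun x u => φ u * G (σ^2) x u)
    (F' := fun x u => φ u * ((u - x)/σ^2 * G (σ^2) x u))
    (bound := fun _ => (|w| + 2)/σ^2) (x₀ := w) (s := ball w 1) (ball_mem_nhds w one_pos)
    (Filter.Eventually.of_forall fun x => (hφ.mul (contG _ x)).aestronglyMeasurable)
    (intOn _ _ _ hφ)
    ((hφ.mul ((continuous_id.sub continuous_const).div_const _ |>.mul
      (contG _ w))).aestronglyMeasurable)
    ?_ ?_ ?_
  · exact key.2
  · rw [ae_restrict_iff' measurableSet_Icc]
    refine Filter.Eventually.of_forall fun u hu => fun x hx => ?_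
    have hxw := abs_lt.mp (by simpa [Real.dist_eq] using Metric.mem_ball.mp hx)
    have h1 : |φ u| ≤ 1 := hb u hu
    have h2 : |u - x| ≤ |w| + 2 := by
      rw [abs_le]
      constructor <;> nlinarith [le_abs_self w, neg_abs_le w, hu.1, hu.2]
    have heq : ‖φ u * ((u - x)/σ^2 * G (σ^2) x u)‖ =
        |φ u| * (|u - x|/σ^2 * G (σ^2) x u) := by
      rw [Real.norm_eq_abs, abs_mul, abs_mul, abs_div, abs_of_pos (Gpos _ _ _),
        abs_of_pos hs]
    rw [heq]
    have hG1 : G (σ^2) x u ≤ 1 := Gle1 hs x u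
    have hG0 : (0:ℝ) < G (σ^2) x u := Gpos _ _ _
    calc |φ u| * (|u - x|/σ^2 * G (σ^2) x u)
        ≤ 1 * ((|w| + 2)/σ^2 * 1) := by
          apply mul_le_mul h1 ?_ (mul_nonneg (by positivity) hG0.le) (by norm_num)
          exact mul_le_mul (by gcongr) hG1 hG0.le (by positivity)
      _ = (|w| + 2)/σ^2 := by ring
  · exact integrableOn_const measure_Icc_lt_top.ne
  · refine Filter.Eventually.of_forall fun u => fun x _ => ?_
    exact (hasDerivG hs u x).const_mul (φ u)

lemma Jint {σ : ℝ} (hσ : 0 < σ) (w : ℝ) (φ : ℝ → ℝ) (hφ : Continuous φ) :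
    IntegrableOn (fun u => φ u * ((u - w)/σ^2 * G (σ^2) w u)) (Icc (-1:ℝ) 1) :=
  ((hφ.mul ((continuous_id.sub continuous_const).div_const _ |>.mul
      (contG _ w)))).integrableOn_Icc

noncomputable def A0 (σ w : ℝ) : ℝ := ∫ u in Icc (-1:ℝ) 1, G (σ^2) w u
noncomputable def A1 (σ w : ℝ) : ℝ := ∫ u in Icc (-1:ℝ) 1, u * G (σ^2) w u
noncomputable def A2 (σ w : ℝ) : ℝ := ∫ u in Icc (-1:ℝ) 1, u^2 * G (σ^2) w u

lemma A0pos (σ w : ℝ) : 0 < A0 σ w := Zpos w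

lemma deriv_Dopt {σ : ℝ} (hσ : 0 < σ) (w : ℝ) :
    deriv (Dopt1 σ) w =
      (A2 σ w * A0 σ w - A1 σ w ^ 2) / (σ^2 * A0 σ w ^ 2) := by
  have hs : (0:ℝ) < σ^2 := by positivity
  have hN := hasDeriv_J hσ w id continuous_id
    (fun u hu => abs_le.mpr ⟨hu.1, hu.2⟩)
  have hZ := hasDeriv_J hσ w (fun _ => 1) continuous_const (by intro u _; simp)
  simp only [id] at hN
  simp only [one_mul] at hZ
  -- rewrite derivative integrals via linearity
  have intG : IntegrableOn (fun u => G (σ^2) w u) (Icc (-1:ℝ) 1) := by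
    simpa using intOn (σ^2) w (fun _ => 1) continuous_const
  have intU : IntegrableOn (fun u => u * G (σ^2) w u) (Icc (-1:ℝ) 1) :=
    intOn (σ^2) w id continuous_id
  have intU2 : IntegrableOn (fun u => u^2 * G (σ^2) w u) (Icc (-1:ℝ) 1) :=
    intOn (σ^2) w (fun u => u^2) (by fun_prop)
  have eN : (∫ u in Icc (-1:ℝ) 1, u * ((u - w)/σ^2 * G (σ^2) w u))
      = (σ^2)⁻¹ * A2 σ w - ((σ^2)⁻¹ * w) * A1 σ w := by
    have e1 : ∀ u : ℝ, u * ((u - w)/σ^2 * G (σ^2) w u)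
        = (σ^2)⁻¹ * (u^2 * G (σ^2) w u) - ((σ^2)⁻¹ * w) * (u * G (σ^2) w u) := by
      intro u; field_simp
    simp_rw [e1]
    rw [integral_sub (intU2.const_mul _) (intU.const_mul _),
      integral_const_mul, integral_const_mul]
    rfl
  have eZ : (∫ u in Icc (-1:ℝ) 1, (u - w)/σ^2 * G (σ^2) w u)
      = (σ^2)⁻¹ * A1 σ w - ((σ^2)⁻¹ * w) * A0 σ w := by
    have e1 : ∀ u : ℝ, (u - w)/σ^2 * G (σ^2) w u
        = (σ^2)⁻¹ * (u * G (σ^2) w u) - ((σ^2)⁻¹ * w) * (G (σ^2) w u) := by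
      intro u; field_simp
    simp_rw [e1]
    rw [integral_sub (intU.const_mul _) (intG.const_mul _),
      integral_const_mul, integral_const_mul]
    rfl
  rw [eN] at hN
  rw [eZ] at hZ
  have hA0 : A0 σ w ≠ 0 := (A0pos σ w).ne'
  have hD := hN.div hZ hA0
  have hDopt : Dopt1 σ = fun x =>
      (∫ u in Icc (-1:ℝ) 1, u * G (σ^2) x u) / ∫ u in Icc (-1:ℝ) 1, G (σ^2) x u := by
    funext x; rfl
  rw [hDopt]
  rw [show deriv (fun x => (∫ u in Icc (-1:ℝ) 1, u * G (σ^2) x u) / ∫ u in Icc (-1:ℝ) 1, G (σ^2) x u) w = _ from hD.deriv]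
  have : A1 σ w = ∫ u in Icc (-1:ℝ) 1, u * G (σ^2) w u := rfl
  rw [← this]
  have : A0 σ w = ∫ u in Icc (-1:ℝ) 1, G (σ^2) w u := rfl
  rw [← this]
  field_simp
  ring

lemma hasDeriv_negmul (μ t : ℝ) : HasDerivAt (fun t : ℝ => -(μ*t)) (-μ) t := by
  have h := ((hasDerivAt_id t).const_mul μ).neg
  rw [mul_one] at h; exact h

lemma int_exp_t1 {μ : ℝ} (hμ : 0 < μ) :
    ∫ t in (0:ℝ)..2, t * Real.exp (-(μ*t)) ≤ 1/μ^2 := by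
  have hd : ∀ t ∈ uIcc (0:ℝ) 2, HasDerivAt (fun t => -((t/μ + 1/μ^2) * Real.exp (-(μ*t))))
      (t * Real.exp (-(μ*t))) t := by
    intro t _
    have h2 := (hasDeriv_negmul μ t).exp
    have h3 : HasDerivAt (fun t : ℝ => t/μ + 1/μ^2) (1/μ) t :=
      ((hasDerivAt_id t).div_const μ).add_const (1/μ^2)
    have h4 := (h3.mul h2).neg
    have he : -(1/μ * Real.exp (-(μ*t)) + (t/μ + 1/μ^2) * (Real.exp (-(μ*t)) * -μ))
        = t * Real.exp (-(μ*t)) := by field_simp; ring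
    rw [he] at h4
    exact h4
  have hint : IntervalIntegrable (fun t : ℝ => t * Real.exp (-(μ*t))) volume 0 2 := by
    apply Continuous.intervalIntegrable; fun_prop
  rw [intervalIntegral.integral_eq_sub_of_hasDerivAt hd hint]
  norm_num [Real.exp_zero]
  positivity

lemma int_exp_t2 {μ : ℝ} (hμ : 0 < μ) :
    ∫ t in (0:ℝ)..2, t^2 * Real.exp (-(μ*t)) ≤ 2/μ^3 := by
  have hd : ∀ t ∈ uIcc (0:ℝ) 2, HasDerivAt
      (fun t => -((t^2/μ + 2*t/μ^2 + 2/μ^3) * Real.exp (-(μ*t))))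
      (t^2 * Real.exp (-(μ*t))) t := by
    intro t _
    have h2 := (hasDeriv_negmul μ t).exp
    have h3 : HasDerivAt (fun t : ℝ => t^2/μ + 2*t/μ^2 + 2/μ^3) (2*t/μ + 2/μ^2) t := by
      have h := ((((hasDerivAt_id t).pow 2).div_const μ).add
        (((hasDerivAt_id t).const_mul 2).div_const (μ^2))).add_const (2/μ^3)
      have he : ((2:ℕ) * t ^ (2-1) * 1 : ℝ) / μ + 2 * 1 / μ ^ 2 = 2*t/μ + 2/μ^2 := by
        push_cast; ring
      simp only [id_eq] at h
      rw [he] at h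
      exact h
    have h4 := (h3.mul h2).neg
    have he : -((2*t/μ + 2/μ^2) * Real.exp (-(μ*t))
        + (t^2/μ + 2*t/μ^2 + 2/μ^3) * (Real.exp (-(μ*t)) * -μ))
        = t^2 * Real.exp (-(μ*t)) := by field_simp; ring
    rw [he] at h4
    exact h4
  have hint : IntervalIntegrable (fun t : ℝ => t^2 * Real.exp (-(μ*t))) volume 0 2 := by
    apply Continuous.intervalIntegrable; fun_prop
  rw [intervalIntegral.integral_eq_sub_of_hasDerivAt hd hint]
  norm_num [Real.exp_zero]
  positivity

lemma int_abs_comp (f : ℝ → ℝ) (hf : Continuous f) {c : ℝ} (hc : c ∈ Icc (-1:ℝ) 1)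
    (hnn : ∀ t, 0 ≤ t → 0 ≤ f t) :
    ∫ u in Icc (-1:ℝ) 1, f |u - c| ≤ 2 * ∫ t in (0:ℝ)..2, f t := by
  have hcont : Continuous fun u : ℝ => f |u - c| := hf.comp (by fun_prop)
  have step1 : ∫ u in Icc (-1:ℝ) 1, f |u - c| ≤ ∫ u in Icc (c-2) (c+2), f |u - c| := by
    apply setIntegral_mono_set (hcont.integrableOn_Icc)
      (Filter.Eventually.of_forall fun u => hnn _ (abs_nonneg _))
    apply HasSubset.Subset.eventuallyLE
    apply Icc_subset_Icc <;> [linarith [hc.2]; linarith [hc.1]]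
  have step2 : ∫ u in Icc (c-2) (c+2), f |u - c| = ∫ v in (-2:ℝ)..2, f |v| := by
    rw [integral_Icc_eq_integral_Ioc,
      ← intervalIntegral.integral_of_le (by linarith : c - 2 ≤ c + 2)]
    have := intervalIntegral.integral_comp_sub_right (a := c-2) (b := c+2)
      (fun v => f |v|) c
    simpa using this
  have hintf : IntervalIntegrable (fun v : ℝ => f |v|) volume (-2) 0 :=
    (hf.comp continuous_abs).intervalIntegrable _ _
  have hintf2 : IntervalIntegrable (fun v : ℝ => f |v|) volume 0 2 :=
    (hf.comp continuous_abs).intervalIntegrable _ _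
  have step3 : ∫ v in (-2:ℝ)..2, f |v| = (∫ v in (-2:ℝ)..0, f |v|) + ∫ v in (0:ℝ)..2, f |v| :=
    (intervalIntegral.integral_add_adjacent_intervals hintf hintf2).symm
  have step4 : ∫ v in (-2:ℝ)..0, f |v| = ∫ v in (0:ℝ)..2, f |v| := by
    have := intervalIntegral.integral_comp_neg (a := (0:ℝ)) (b := 2) (fun v => f |v|)
    simp only [abs_neg, neg_zero] at this
    exact this.symm
  have step5 : ∫ v in (0:ℝ)..2, f |v| = ∫ v in (0:ℝ)..2, f v := by
    apply intervalIntegral.integral_congr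
    intro x hx
    rw [uIcc_of_le (by norm_num : (0:ℝ) ≤ 2)] at hx
    show f |x| = f x
    rw [abs_of_nonneg hx.1]
  calc ∫ u in Icc (-1:ℝ) 1, f |u - c| ≤ ∫ u in Icc (c-2) (c+2), f |u - c| := step1
    _ = ∫ v in (-2:ℝ)..2, f |v| := step2
    _ = 2 * ∫ t in (0:ℝ)..2, f t := by rw [step3, step4, step5]; ring

noncomputable def cl (w : ℝ) : ℝ := max (-1) (min 1 w)

lemma cl_mem (w : ℝ) : cl w ∈ Icc (-1:ℝ) 1 :=
  ⟨le_max_left _ _, max_le (by norm_num) (min_le_left _ _)⟩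

lemma sq_decomp (w u : ℝ) (hu : u ∈ Icc (-1:ℝ) 1) :
    (u - w)^2 = (u - cl w)^2 + 2 * |w - cl w| * |u - cl w| + (w - cl w)^2 := by
  rcases le_or_gt w (-1) with h | h
  · have hc : cl w = -1 := by
      rw [cl, min_eq_right (le_trans h (by norm_num)), max_eq_left h]
    have h1 : |u - cl w| = u + 1 := by
      rw [hc, abs_of_nonneg (by linarith [hu.1] : (0:ℝ) ≤ u - -1)]; ring
    have h2 : |w - cl w| = -1 - w := by
      rw [hc, abs_of_nonpos (by linarith : w - -1 ≤ 0)]; ring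
    rw [h1, h2, hc]; ring
  rcases le_or_gt w 1 with h' | h'
  · have hc : cl w = w := by
      rw [cl, min_eq_right h', max_eq_right h.le]
    rw [hc]; simp
  · have hc : cl w = 1 := by
      rw [cl, min_eq_left h'.le, max_eq_right (by norm_num)]
    have h1 : |u - cl w| = 1 - u := by
      rw [hc, abs_of_nonpos (by linarith [hu.2] : u - 1 ≤ 0)]; ring
    have h2 : |w - cl w| = w - 1 := by
      rw [hc, abs_of_nonneg (by linarith : (0:ℝ) ≤ w - 1)]
    rw [h1, h2, hc]; ring

lemma exponent_ineq {σ a t : ℝ} (hσ : 0 < σ) (ha : 0 ≤ a) (ht : 0 ≤ t) :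
    -(t^2 + 2 * a * t + a^2) / (2*σ^2) ≤
      -(a^2/(2*σ^2)) + (1/2 + -(max a σ/σ^2 * t)) := by
  rw [← sub_nonneg]
  rcases le_total a σ with h | h
  · rw [max_eq_right h]
    have key : (0:ℝ) ≤ (t^2 + 2*a*t) - (2*σ*t - σ^2) := by nlinarith [sq_nonneg (t - σ)]
    have he : (-(a^2/(2*σ^2)) + (1/2 + -(σ/σ^2 * t))) - -(t^2 + 2*a*t + a^2) / (2*σ^2)
        = ((t^2 + 2*a*t) - (2*σ*t - σ^2))/(2*σ^2) := by field_simp; ring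
    rw [he]; positivity
  · rw [max_eq_left h]
    have key : (0:ℝ) ≤ t^2 + σ^2 := by positivity
    have he : (-(a^2/(2*σ^2)) + (1/2 + -(a/σ^2 * t))) - -(t^2 + 2*a*t + a^2) / (2*σ^2)
        = (t^2 + σ^2)/(2*σ^2) := by field_simp; ring
    rw [he]; positivity

lemma G_upper {σ : ℝ} (hσ : 0 < σ) (w : ℝ) {u : ℝ} (hu : u ∈ Icc (-1:ℝ) 1) :
    G (σ^2) w u ≤ Real.exp (-((w - cl w)^2/(2*σ^2))) *
      (Real.exp (1/2) * Real.exp (-(max |w - cl w| σ/σ^2 * |u - cl w|))) := by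
  rw [G, sq_decomp w u hu, ← Real.exp_add, ← Real.exp_add]
  apply Real.exp_le_exp.mpr
  rw [← sq_abs (u - cl w), ← sq_abs (w - cl w)]
  exact exponent_ineq hσ (abs_nonneg _) (abs_nonneg _)

lemma A0_lower {σ w : ℝ} (hσ : 0 < σ) (hσ1 : σ ≤ 1) :
    Real.exp (-((w - cl w)^2/(2*σ^2))) * Real.exp (-(3/2)) * (σ^2 / max |w - cl w| σ)
      ≤ A0 σ w := by
  set c := cl w with hc_def
  set a := |w - cl w| with ha_def
  have ha : 0 ≤ a := abs_nonneg _
  set Mx := max a σ with hMx_def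
  have hMx : 0 < Mx := lt_of_lt_of_le hσ (le_max_right a σ)
  set m := σ^2 / Mx with hm_def
  have hm : 0 < m := by positivity
  have hmσ : m ≤ σ := by
    rw [hm_def, div_le_iff₀ hMx]
    nlinarith [le_max_right a σ]
  have hm1 : m ≤ 1 := hmσ.trans hσ1
  have ham : a * m ≤ σ^2 := by
    rw [hm_def, mul_div_assoc', div_le_iff₀ hMx]
    nlinarith [le_max_left a σ, sq_nonneg σ]
  set K := Real.exp (-((w - c)^2/(2*σ^2))) with hK_def
  have hK : 0 < K := Real.exp_pos _
  have hcm : c ∈ Icc (-1:ℝ) 1 := cl_mem w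
  -- choose the interval I
  obtain ⟨I, hIsub, hIvol, hIt⟩ : ∃ I : Set ℝ, I ⊆ Icc (-1:ℝ) 1 ∧
      (volume I).toReal = m ∧ (∀ u ∈ I, |u - c| ≤ m) ∧ MeasurableSet I := by
    rcases le_or_gt c 0 with hc0 | hc0
    · refine ⟨Icc c (c+m), Icc_subset_Icc hcm.1 (by linarith), ?_, ?_, measurableSet_Icc⟩
      · rw [Real.volume_Icc]
        rw [show c + m - c = m by ring, ENNReal.toReal_ofReal hm.le]
      · intro u hu
        rw [abs_le]
        constructor <;> [linarith [hu.1]; linarith [hu.2]]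
    · refine ⟨Icc (c-m) c, Icc_subset_Icc (by linarith) hcm.2, ?_, ?_, measurableSet_Icc⟩
      · rw [Real.volume_Icc]
        rw [show c - (c - m) = m by ring, ENNReal.toReal_ofReal hm.le]
      · intro u hu
        rw [abs_le]
        constructor <;> [linarith [hu.1]; linarith [hu.2]]
  obtain ⟨hIt, hImeas⟩ := hIt
  have hpt : ∀ u ∈ I, K * Real.exp (-(3/2)) ≤ G (σ^2) w u := by
    intro u hu
    have hu' := hIsub hu
    have ht := hIt u hu
    have htn : (0:ℝ) ≤ |u - c| := abs_nonneg _
    rw [G, sq_decomp w u hu', hK_def, ← Real.exp_add]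
    apply Real.exp_le_exp.mpr
    rw [← sub_nonneg]
    have he : -((u - c)^2 + 2 * a * |u - c| + (w - c)^2) / (2*σ^2)
        - (-((w - c)^2/(2*σ^2)) + -(3/2))
        = (3*σ^2 - ((u - c)^2 + 2 * a * |u - c|))/(2*σ^2) := by
      field_simp; ring
    rw [he]
    apply div_nonneg _ (by positivity)
    have h1 : (u - c)^2 ≤ σ^2 := by
      rw [← sq_abs (u - c)]
      nlinarith
    have h2 : a * |u - c| ≤ σ^2 := by nlinarith
    linarith
  have intG : IntegrableOn (fun u => G (σ^2) w u) (Icc (-1:ℝ) 1) := by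
    simpa using intOn (σ^2) w (fun _ => 1) continuous_const
  calc K * Real.exp (-(3/2)) * m = ∫ _ in I, K * Real.exp (-(3/2)) := by
        rw [setIntegral_const, smul_eq_mul, measureReal_def, hIvol]; ring
    _ ≤ ∫ u in I, G (σ^2) w u := by
        apply setIntegral_mono_on (integrableOn_const
          (lt_of_le_of_lt (measure_mono hIsub) measure_Icc_lt_top).ne)
          (intG.mono_set hIsub) hImeas hpt
    _ ≤ A0 σ w := by
        apply setIntegral_mono_set intG
          (Filter.Eventually.of_forall fun u => (Gpos _ _ _).le)
          (HasSubset.Subset.eventuallyLE hIsub)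

lemma M2_upper {σ w : ℝ} (hσ : 0 < σ) :
    ∫ u in Icc (-1:ℝ) 1, (u - cl w)^2 * G (σ^2) w u
      ≤ Real.exp (-((w - cl w)^2/(2*σ^2))) * Real.exp (1/2)
        * (2 * (2/(max |w - cl w| σ/σ^2)^3)) := by
  set c := cl w with hc_def
  set K := Real.exp (-((w - c)^2/(2*σ^2))) with hK_def
  have hK : 0 < K := Real.exp_pos _
  set μ := max |w - c| σ/σ^2 with hμ_def
  have hμ : 0 < μ := by
    apply div_pos (lt_of_lt_of_le hσ (le_max_right _ _)) (by positivity)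
  have hpt : ∀ u ∈ Icc (-1:ℝ) 1, (u - c)^2 * G (σ^2) w u
      ≤ (K * Real.exp (1/2)) * (|u - c|^2 * Real.exp (-(μ * |u - c|))) := by
    intro u hu
    have hG := G_upper hσ w hu
    calc (u - c)^2 * G (σ^2) w u
        ≤ (u - c)^2 * (K * (Real.exp (1/2) * Real.exp (-(μ * |u - c|)))) :=
          mul_le_mul_of_nonneg_left hG (sq_nonneg _)
      _ = (K * Real.exp (1/2)) * (|u - c|^2 * Real.exp (-(μ * |u - c|))) := by
          rw [sq_abs]; ring
  have habs := int_abs_comp (fun t => t^2 * Real.exp (-(μ * t))) (by fun_prop)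
    (cl_mem w) (fun t ht => by positivity)
  calc ∫ u in Icc (-1:ℝ) 1, (u - c)^2 * G (σ^2) w u
      ≤ ∫ u in Icc (-1:ℝ) 1, (K * Real.exp (1/2)) * (|u - c|^2 * Real.exp (-(μ * |u - c|))) := by
        apply setIntegral_mono_on ?_ ?_ measurableSet_Icc hpt
        · exact (((continuous_id.sub continuous_const).pow 2).mul (contG _ _)).integrableOn_Icc
        · exact Continuous.integrableOn_Icc (by fun_prop)
    _ = (K * Real.exp (1/2)) * ∫ u in Icc (-1:ℝ) 1, |u - c|^2 * Real.exp (-(μ * |u - c|)) := by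
        rw [integral_const_mul]
    _ ≤ (K * Real.exp (1/2)) * (2 * (2/μ^3)) := by
        apply mul_le_mul_of_nonneg_left _ (by positivity)
        calc ∫ u in Icc (-1:ℝ) 1, |u - c|^2 * Real.exp (-(μ * |u - c|))
            ≤ 2 * ∫ t in (0:ℝ)..2, t^2 * Real.exp (-(μ * t)) := habs
          _ ≤ 2 * (2/μ^3) := by
              have := int_exp_t2 hμ
              linarith
    _ = K * Real.exp (1/2) * (2 * (2/μ^3)) := by ring

lemma M1_upper {σ w : ℝ} (hσ : 0 < σ) :
    ∫ u in Icc (-1:ℝ) 1, |u - cl w| * G (σ^2) w u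
      ≤ Real.exp (-((w - cl w)^2/(2*σ^2))) * Real.exp (1/2)
        * (2 * (1/(max |w - cl w| σ/σ^2)^2)) := by
  set c := cl w with hc_def
  set K := Real.exp (-((w - c)^2/(2*σ^2))) with hK_def
  have hK : 0 < K := Real.exp_pos _
  set μ := max |w - c| σ/σ^2 with hμ_def
  have hμ : 0 < μ := by
    apply div_pos (lt_of_lt_of_le hσ (le_max_right _ _)) (by positivity)
  have hpt : ∀ u ∈ Icc (-1:ℝ) 1, |u - c| * G (σ^2) w u
      ≤ (K * Real.exp (1/2)) * (|u - c| * Real.exp (-(μ * |u - c|))) := by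
    intro u hu
    have hG := G_upper hσ w hu
    calc |u - c| * G (σ^2) w u
        ≤ |u - c| * (K * (Real.exp (1/2) * Real.exp (-(μ * |u - c|)))) :=
          mul_le_mul_of_nonneg_left hG (abs_nonneg _)
      _ = (K * Real.exp (1/2)) * (|u - c| * Real.exp (-(μ * |u - c|))) := by ring
  have habs := int_abs_comp (fun t => t * Real.exp (-(μ * t))) (by fun_prop)
    (cl_mem w) (fun t ht => by positivity)
  calc ∫ u in Icc (-1:ℝ) 1, |u - c| * G (σ^2) w u
      ≤ ∫ u in Icc (-1:ℝ) 1, (K * Real.exp (1/2)) * (|u - c| * Real.exp (-(μ * |u - c|))) := by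
        apply setIntegral_mono_on ?_ ?_ measurableSet_Icc hpt
        · exact ((continuous_abs.comp (continuous_id.sub continuous_const)).mul
            (contG _ _)).integrableOn_Icc
        · exact Continuous.integrableOn_Icc (by fun_prop)
    _ = (K * Real.exp (1/2)) * ∫ u in Icc (-1:ℝ) 1, |u - c| * Real.exp (-(μ * |u - c|)) := by
        rw [integral_const_mul]
    _ ≤ (K * Real.exp (1/2)) * (2 * (1/μ^2)) := by
        apply mul_le_mul_of_nonneg_left _ (by positivity)
        calc ∫ u in Icc (-1:ℝ) 1, |u - c| * Real.exp (-(μ * |u - c|))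
            ≤ 2 * ∫ t in (0:ℝ)..2, t * Real.exp (-(μ * t)) := by
              have h := habs
              calc ∫ u in Icc (-1:ℝ) 1, |u - c| * Real.exp (-(μ * |u - c|))
                  = ∫ u in Icc (-1:ℝ) 1, |u - c|^1 * Real.exp (-(μ * |u - c|)) := by
                    norm_num
                _ ≤ 2 * ∫ t in (0:ℝ)..2, t * Real.exp (-(μ * t)) := by
                    rw [show (fun u => |u - c|^1 * Real.exp (-(μ * |u - c|)))
                      = fun u => |u - c| * Real.exp (-(μ * |u - c|)) by funext x; rw [pow_one]]
                    exact habs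
          _ ≤ 2 * (1/μ^2) := by
              have := int_exp_t1 hμ
              linarith
    _ = K * Real.exp (1/2) * (2 * (1/μ^2)) := by ring

lemma moment_ident {σ : ℝ} (w : ℝ) :
    A2 σ w * A0 σ w - A1 σ w^2 =
      (∫ u in Icc (-1:ℝ) 1, (u - cl w)^2 * G (σ^2) w u) * A0 σ w
      - (∫ u in Icc (-1:ℝ) 1, (u - cl w) * G (σ^2) w u)^2 := by
  set c := cl w with hc_def
  have intG : IntegrableOn (fun u => G (σ^2) w u) (Icc (-1:ℝ) 1) := by
    simpa using intOn (σ^2) w (fun _ => 1) continuous_const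
  have intU : IntegrableOn (fun u => u * G (σ^2) w u) (Icc (-1:ℝ) 1) :=
    intOn (σ^2) w id continuous_id
  have intU2 : IntegrableOn (fun u => u^2 * G (σ^2) w u) (Icc (-1:ℝ) 1) :=
    intOn (σ^2) w (fun u => u^2) (by fun_prop)
  have h2 : ∫ u in Icc (-1:ℝ) 1, (u - c)^2 * G (σ^2) w u
      = A2 σ w - 2*c*A1 σ w + c^2*A0 σ w := by
    have e : ∀ u : ℝ, (u - c)^2 * G (σ^2) w u
        = u^2 * G (σ^2) w u - (2*c) * (u * G (σ^2) w u) + c^2 * G (σ^2) w u := by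
      intro u; ring
    simp_rw [e]
    have hsub : Integrable (fun u => u^2 * G (σ^2) w u - 2*c*(u * G (σ^2) w u))
        (volume.restrict (Icc (-1:ℝ) 1)) := intU2.sub (intU.const_mul (2*c))
    rw [integral_add hsub (intG.const_mul (c^2)),
      integral_sub intU2 (intU.const_mul (2*c)), integral_const_mul, integral_const_mul]
    rfl
  have h1 : ∫ u in Icc (-1:ℝ) 1, (u - c) * G (σ^2) w u = A1 σ w - c*A0 σ w := by
    have e : ∀ u : ℝ, (u - c) * G (σ^2) w u
        = u * G (σ^2) w u - c * G (σ^2) w u := by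
      intro u; ring
    simp_rw [e]
    rw [integral_sub intU (intG.const_mul c), integral_const_mul]
    rfl
  rw [h2, h1]; ring

set_option maxHeartbeats 1000000 in
lemma main_est {σ : ℝ} (hσ : 0 < σ) (w : ℝ) :
    |A2 σ w * A0 σ w - A1 σ w^2| ≤ 300 * (σ^2 * A0 σ w^2) := by
  set c := cl w with hc_def
  set M2 := ∫ u in Icc (-1:ℝ) 1, (u - c)^2 * G (σ^2) w u with hM2d
  set M1 := ∫ u in Icc (-1:ℝ) 1, (u - c) * G (σ^2) w u with hM1d
  set Mb := ∫ u in Icc (-1:ℝ) 1, |u - c| * G (σ^2) w u with hMbd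
  have hA0 : 0 < A0 σ w := A0pos σ w
  have hM2nn : 0 ≤ M2 := setIntegral_nonneg measurableSet_Icc
    (fun u _ => mul_nonneg (sq_nonneg _) (Gpos _ _ _).le)
  have hMbnn : 0 ≤ Mb := setIntegral_nonneg measurableSet_Icc
    (fun u _ => mul_nonneg (abs_nonneg _) (Gpos _ _ _).le)
  have hM1Mb : |M1| ≤ Mb := by
    have e : ∀ u : ℝ, |(u - c) * G (σ^2) w u| = |u - c| * G (σ^2) w u := fun u => by
      rw [abs_mul, abs_of_pos (Gpos _ _ _)]
    calc |M1| = ‖M1‖ := (Real.norm_eq_abs _).symm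
      _ ≤ ∫ u in Icc (-1:ℝ) 1, ‖(u - c) * G (σ^2) w u‖ := norm_integral_le_integral_norm _
      _ = Mb := by simp_rw [Real.norm_eq_abs, e]; rfl
  have hM1sq : M1^2 ≤ Mb^2 := by nlinarith [sq_abs M1, abs_nonneg M1]
  have habs : |A2 σ w * A0 σ w - A1 σ w^2| ≤ M2 * A0 σ w + Mb^2 := by
    rw [moment_ident w, ← hc_def, ← hM2d, ← hM1d, abs_le]
    constructor
    · nlinarith [mul_nonneg hM2nn hA0.le]
    · nlinarith [sq_nonneg M1]
  rcases le_total σ 1 with hσ1 | hσ1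
  · -- small σ
    set a := |w - c| with ha_def
    have ha : 0 ≤ a := abs_nonneg _
    set Mx := max a σ with hMx_def
    have hMx : 0 < Mx := lt_of_lt_of_le hσ (le_max_right a σ)
    set m := σ^2 / Mx with hm_def
    have hm : 0 < m := by positivity
    have hmσ : m ≤ σ := by
      rw [hm_def, div_le_iff₀ hMx]
      nlinarith [le_max_right a σ]
    set μ := Mx/σ^2 with hμ_def
    have hμ : 0 < μ := by positivity
    have hinv3 : 2/μ^3 = 2*m^3 := by
      rw [hμ_def, hm_def]; field_simp
    have hinv2 : 1/μ^2 = m^2 := by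
      rw [hμ_def, hm_def]; field_simp
    set K := Real.exp (-((w - c)^2/(2*σ^2))) with hK_def
    have hK : 0 < K := Real.exp_pos _
    have hE : Real.exp (1/2) = Real.exp 2 * Real.exp (-(3/2)) := by
      rw [← Real.exp_add]; norm_num
    set X := K * Real.exp (-(3/2)) * m with hX_def
    have hX0 : 0 < X := by positivity
    have hXA : X ≤ A0 σ w := A0_lower hσ hσ1
    have h1 : M2 ≤ 4 * Real.exp 2 * m^2 * X := by
      calc M2 ≤ K * Real.exp (1/2) * (2 * (2/μ^3)) := M2_upper hσ
        _ = 4 * Real.exp 2 * m^2 * X := by rw [hinv3, hE, hX_def]; ring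
    have h2 : Mb ≤ 2 * Real.exp 2 * m * X := by
      calc Mb ≤ K * Real.exp (1/2) * (2 * (1/μ^2)) := M1_upper hσ
        _ = 2 * Real.exp 2 * m * X := by rw [hinv2, hE, hX_def]; ring
    have hm2 : m^2 ≤ σ^2 := by nlinarith
    have he2 : Real.exp 2 ≤ 7.39 := by
      have h := Real.exp_one_lt_d9
      have : Real.exp 2 = Real.exp 1 * Real.exp 1 := by
        rw [← Real.exp_add]; norm_num
      nlinarith [Real.exp_pos 1]
    have k1 : m^2 * X ≤ σ^2 * A0 σ w := mul_le_mul hm2 hXA hX0.le (by positivity)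
    have kA : M2 * A0 σ w ≤ 4 * Real.exp 2 * (σ^2 * A0 σ w^2) := by
      calc M2 * A0 σ w ≤ (4 * Real.exp 2 * m^2 * X) * A0 σ w :=
            mul_le_mul_of_nonneg_right h1 hA0.le
        _ = (4 * Real.exp 2) * ((m^2 * X) * A0 σ w) := by ring
        _ ≤ (4 * Real.exp 2) * ((σ^2 * A0 σ w) * A0 σ w) :=
            mul_le_mul_of_nonneg_left (mul_le_mul_of_nonneg_right k1 hA0.le) (by positivity)
        _ = 4 * Real.exp 2 * (σ^2 * A0 σ w^2) := by ring
    have kB : Mb^2 ≤ 4 * (Real.exp 2)^2 * (σ^2 * A0 σ w^2) := by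
      have h3 : Mb^2 ≤ (2 * Real.exp 2 * m * X)^2 := pow_le_pow_left₀ hMbnn h2 2
      calc Mb^2 ≤ (2 * Real.exp 2 * m * X)^2 := h3
        _ = (4 * (Real.exp 2)^2) * (m^2 * X^2) := by ring
        _ ≤ (4 * (Real.exp 2)^2) * (σ^2 * A0 σ w^2) := by
            apply mul_le_mul_of_nonneg_left _ (by positivity)
            exact mul_le_mul hm2 (pow_le_pow_left₀ hX0.le hXA 2) (by positivity) (by positivity)
        _ = 4 * (Real.exp 2)^2 * (σ^2 * A0 σ w^2) := by ring
    have hcoef : 4 * Real.exp 2 + 4 * (Real.exp 2)^2 ≤ 300 := by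
      nlinarith [he2, Real.exp_pos 2]
    calc |A2 σ w * A0 σ w - A1 σ w^2| ≤ M2 * A0 σ w + Mb^2 := habs
      _ ≤ (4 * Real.exp 2 + 4 * (Real.exp 2)^2) * (σ^2 * A0 σ w^2) := by linarith
      _ ≤ 300 * (σ^2 * A0 σ w^2) :=
          mul_le_mul_of_nonneg_right hcoef (by positivity)
  · -- big σ
    have hcmem := cl_mem w
    have hptM2 : ∀ u ∈ Icc (-1:ℝ) 1, (u - c)^2 * G (σ^2) w u ≤ 4 * G (σ^2) w u := by
      intro u hu
      have : (u - c)^2 ≤ 4 := by nlinarith [hu.1, hu.2, hcmem.1, hcmem.2]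
      nlinarith [Gpos (σ^2) w u]
    have hptMb : ∀ u ∈ Icc (-1:ℝ) 1, |u - c| * G (σ^2) w u ≤ 2 * G (σ^2) w u := by
      intro u hu
      have : |u - c| ≤ 2 := by
        rw [abs_le]; constructor <;> nlinarith [hu.1, hu.2, hcmem.1, hcmem.2]
      nlinarith [Gpos (σ^2) w u]
    have intG : IntegrableOn (fun u => G (σ^2) w u) (Icc (-1:ℝ) 1) := by
      simpa using intOn (σ^2) w (fun _ => 1) continuous_const
    have hM2A : M2 ≤ 4 * A0 σ w := by
      calc M2 ≤ ∫ u in Icc (-1:ℝ) 1, 4 * G (σ^2) w u := by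
            apply setIntegral_mono_on
              ((((continuous_id.sub continuous_const).pow 2).mul (contG _ _)).integrableOn_Icc)
              (intG.const_mul 4) measurableSet_Icc hptM2
        _ = 4 * A0 σ w := integral_const_mul 4 _
    have hMbA : Mb ≤ 2 * A0 σ w := by
      calc Mb ≤ ∫ u in Icc (-1:ℝ) 1, 2 * G (σ^2) w u := by
            apply setIntegral_mono_on
              (((continuous_abs.comp (continuous_id.sub continuous_const)).mul
                (contG _ _)).integrableOn_Icc)
              (intG.const_mul 2) measurableSet_Icc hptMb
        _ = 2 * A0 σ w := integral_const_mul 2 _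
    have hσ2 : 1 ≤ σ^2 := by nlinarith
    calc |A2 σ w * A0 σ w - A1 σ w^2| ≤ M2 * A0 σ w + Mb^2 := habs
      _ ≤ 4 * A0 σ w * A0 σ w + (2 * A0 σ w)^2 := by
          have := mul_le_mul_of_nonneg_right hM2A hA0.le
          have h' : Mb^2 ≤ (2 * A0 σ w)^2 := by nlinarith
          linarith
      _ ≤ 300 * (σ^2 * A0 σ w^2) := by nlinarith [sq_nonneg (A0 σ w), hA0]


end UniformDenoiserAux

open UniformDenoiserAux in
/-- There is a constant `L⋆ > 0` such that the optimal
denoiser for the uniform distribution on `[-1,1]` satisfies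
`|∂_w D_opt(w;σ)| ≤ L⋆` for all `w ∈ ℝ` and all `σ > 0`; i.e. `D_opt(·;σ)` is
`L⋆`-Lipschitz uniformly in `σ`. -/
theorem uniform_denoiser_uniformly_lipschitz :
    ∃ L > 0, ∀ σ : ℝ, 0 < σ → ∀ w : ℝ, |deriv (Dopt1 σ) w| ≤ L := by
  refine ⟨300, by norm_num, fun σ hσ w => ?_⟩
  rw [deriv_Dopt hσ w, abs_div]
  have hA0 := A0pos σ w
  have hden : |σ^2 * A0 σ w^2| = σ^2 * A0 σ w^2 := abs_of_pos (by positivity)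
  rw [hden, div_le_iff₀ (by positivity)]
  exact main_est hσ w
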